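/- Every element of the set E is strictly less than 1/2; in particular 1/2 ∉ E, and every real x ≥ 1/2 lies outside E. -/

import Mathlib

/-!
Writing `λ = l(l+1) ≥ 2` and `ν = n(n+1) ≥ 6`, the discriminant satisfies
`(νλ)² - 2λν(ν+λ-2) = νλ(ν-2)(λ-2) ≥ 0`, so `√(2λν(ν+λ-2)) ≤ νλ` and the numerator
`νλ ± √(…)` is nonnegative while the denominator `2ν(ν-2)` is positive. Hence every element
of `E_ν` is at most `1/2`, and `1/2` itself is removed by definition.
-/

/-- The set of exceptional values `E_ν` for a real parameter ν. -/
def exceptionalSet (ν : ℝ) : Set ℝ :=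
  { x | (∃ l : ℤ, 1 ≤ l ∧ ∃ s : ℝ, (s = 1 ∨ s = -1) ∧
      x = 1 / 2 - (ν * ((l : ℝ) * ((l : ℝ) + 1)) +
        s * Real.sqrt (2 * ((l : ℝ) * ((l : ℝ) + 1)) * ν *
          (ν + (l : ℝ) * ((l : ℝ) + 1) - 2))) / (2 * ν * (ν - 2))) ∧
    x ≠ 1 / 2 }

/-- The union `E = ⋃_{n ≥ 2} E_{n(n+1)}`. -/
def exceptionalUnion : Set ℝ :=
  ⋃ n ∈ { n : ℤ | 2 ≤ n }, exceptionalSet ((n : ℝ) * ((n : ℝ) + 1))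

open Set

lemma two_le_mul_add_one {l : ℝ} (hl : 1 ≤ l) : 2 ≤ l * (l + 1) := by
  nlinarith

lemma sqrt_two_mul_mul_add_sub_two_le {ν lam : ℝ} (hν : 2 ≤ ν) (hlam : 2 ≤ lam) :
    √(2 * lam * ν * (ν + lam - 2)) ≤ ν * lam := by
  have hgap : (ν * lam) ^ 2 - 2 * lam * ν * (ν + lam - 2) = ν * lam * ((ν - 2) * (lam - 2)) := by
    ring
  refine Real.sqrt_le_iff.mpr ⟨by positivity, ?_⟩
  have : 0 ≤ ν * lam * ((ν - 2) * (lam - 2)) := by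
    have := mul_nonneg (sub_nonneg.mpr hν) (sub_nonneg.mpr hlam)
    positivity
  linarith

lemma exceptionalSet_subset_Iio {ν : ℝ} (hν : 2 < ν) : exceptionalSet ν ⊆ Iio (1 / 2) := by
  rintro x ⟨⟨l, hl, s, hs, rfl⟩, hx⟩
  set lam : ℝ := l * (l + 1)
  have hlam : 2 ≤ lam := two_le_mul_add_one (by exact_mod_cast hl)
  set A := √(2 * lam * ν * (ν + lam - 2))
  have hA : A ≤ ν * lam := sqrt_two_mul_mul_add_sub_two_le hν.le hlam
  have hsA : -A ≤ s * A := by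
    rcases hs with rfl | rfl
    · linarith [Real.sqrt_nonneg (2 * lam * ν * (ν + lam - 2))]
    · simp
  have hnum : 0 ≤ ν * lam + s * A := by linarith
  have hden : 0 < 2 * ν * (ν - 2) := by nlinarith
  have hle : 1 / 2 - (ν * lam + s * A) / (2 * ν * (ν - 2)) ≤ 1 / 2 := by
    linarith [div_nonneg hnum hden.le]
  exact lt_of_le_of_ne hle hx

lemma exceptionalUnion_subset_Iio : exceptionalUnion ⊆ Iio (1 / 2) := by
  refine iUnion₂_subset fun n (hn : 2 ≤ n) => exceptionalSet_subset_Iio ?_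
  have hn' : (2 : ℝ) ≤ n := by exact_mod_cast hn
  nlinarith

theorem exceptionalUnion_lt_half :
    (∀ x ∈ exceptionalUnion, x < 1 / 2) ∧
    (1 / 2 : ℝ) ∉ exceptionalUnion ∧
    ∀ x : ℝ, 1 / 2 ≤ x → x ∉ exceptionalUnion := by
  have hlt : ∀ x ∈ exceptionalUnion, x < 1 / 2 := fun x hx => exceptionalUnion_subset_Iio hx
  exact ⟨hlt, fun h => (hlt _ h).false, fun x hx h => (hlt x h).not_ge hx⟩
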